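/- Let r ≥ 2 be an integer. The poset P_{𝓛×[r]} is pure if and only if for every s ∈ [t] the following hold: (a) u_k − u_i = 2(k − i) for all i, k ∈ [p_s, q_s] with i ≤ k such that ε_i > 1 and ε_k > 1; (b) v_k − v_i = 2(k − i) for all i, k ∈ [p_s, q_s] with i ≤ k such that θ_{i−1} > 1 and θ_{k−1} > 1; (c) r = Δ_{p_s} + i_s − p_s + 1. -/

import Mathlib

/-!
`P_{𝓛×[r]}` is the disjoint union of `P_𝓛 × {1}` and the chain `((u_1,…,u_n), k)`, `2 ≤ k ≤ r`.
On `P_𝓛` the function `a_{i,j} ↦ j - 2i` is a rank function (every cover raises it by one), so,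
as in any finite poset with a rank function, purity means that `rank y - rank x` takes the same
value `r - 2` for all comparable minimal `x` and maximal `y`. The minimal elements of `P_𝓛` are
the `a_{k,u_k+1}` with `ε_k > 1` and the maximal ones the `a_{i,v_i}` with `θ_{i-1} > 1`.
Comparable pairs never straddle two blocks of `C`, and inside a block the comparable pairs link
all extremal elements, so the condition says that the ranks of the minimal and of the maximal
elements are constant on each block, (a) and (b), with difference `r - 2`, (c).
-/

namespace LadderPaper

/-- The tuple `a_{i,j}`: entry `t` is `u t` for `t < i` and `max (j + (t - i)) (u t)` for
`t ≥ i` (indices `t ∈ [1,n]`; entries outside `[1,n]` are set to `0`). -/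
def atuple (u : ℕ → ℤ) (n i : ℕ) (j : ℤ) : ℕ → ℤ := fun t =>
  if 1 ≤ t ∧ t ≤ n then
    (if t < i then u t else max (j + ((t : ℤ) - (i : ℤ))) (u t))
  else 0

/-- The tuple `b_{i,j}`: like `a_{i,j}` but with `i`-th entry `j - 1`. -/
def btuple (u : ℕ → ℤ) (n i : ℕ) (j : ℤ) : ℕ → ℤ := fun t =>
  if 1 ≤ t ∧ t ≤ n then
    (if t < i then u t
     else if t = i then j - 1
     else max (j + ((t : ℤ) - (i : ℤ))) (u t))
  else 0

/-- The tuple `(u_1, …, u_n)`. -/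
def utuple (u : ℕ → ℤ) (n : ℕ) : ℕ → ℤ := fun t =>
  if 1 ≤ t ∧ t ≤ n then u t else 0

/-- The lattice `𝓛` of tuples `c` with `u t ≤ c t ≤ v t` for `t ∈ [1,n]`, strictly
increasing entries, and (normalization) `c t = 0` outside `[1,n]`.  It carries the
componentwise (induced product) order. -/
def ladderL (n : ℕ) (u v : ℕ → ℤ) : Set (ℕ → ℤ) :=
  {c | (∀ t, 1 ≤ t → t ≤ n → u t ≤ c t ∧ c t ≤ v t) ∧
       (∀ t, 1 ≤ t → t + 1 ≤ n → c t < c (t + 1)) ∧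
       (∀ t, t = 0 ∨ n < t → c t = 0)}

/-- The set `P_𝓛 = { a_{i,j} : i ∈ [n], j ∈ [u_i + 1, v_i] }`. -/
def PL (n : ℕ) (u v : ℕ → ℤ) : Set (ℕ → ℤ) :=
  {x | ∃ i : ℕ, ∃ j : ℤ, 1 ≤ i ∧ i ≤ n ∧ u i + 1 ≤ j ∧ j ≤ v i ∧ x = atuple u n i j}

/-- The product poset `𝓛 × [r]`. -/
def ladderLr (n : ℕ) (u v : ℕ → ℤ) (r : ℤ) : Set ((ℕ → ℤ) × ℤ) :=
  {p | p.1 ∈ ladderL n u v ∧ 1 ≤ p.2 ∧ p.2 ≤ r}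

/-- The set `P_{𝓛×[r]} = { (a_{i,j}, 1) } ∪ { ((u_1,…,u_n), k) : k ∈ [2,r] }`. -/
def PLr (n : ℕ) (u v : ℕ → ℤ) (r : ℤ) : Set ((ℕ → ℤ) × ℤ) :=
  {p | (p.1 ∈ PL n u v ∧ p.2 = 1) ∨ (p.1 = utuple u n ∧ 2 ≤ p.2 ∧ p.2 ≤ r)}

/-- `ε_i > 1`, with the convention `ε_n > 1` (i.e. `i = n` or `u_{i+1} - u_i > 1`). -/
def epsGt1 (u : ℕ → ℤ) (n i : ℕ) : Prop := i = n ∨ 1 < u (i + 1) - u i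

/-- `θ_{i-1} > 1`, with the convention `θ_0 > 1` (i.e. `i = 1` or `v_i - v_{i-1} > 1`). -/
def thetaGt1 (v : ℕ → ℤ) (i : ℕ) : Prop := i = 1 ∨ 1 < v i - v (i - 1)

/-- Membership in `C = { i ∈ [n-1] : v_i < u_{i+1} } ∪ { n }`. -/
def inC (n : ℕ) (u v : ℕ → ℤ) (i : ℕ) : Prop :=
  (1 ≤ i ∧ i + 1 ≤ n ∧ v i < u (i + 1)) ∨ i = n

/-- The set `C = { i ∈ [n-1] : v_i < u_{i+1} } ∪ { n }`. -/
def Cset (n : ℕ) (u v : ℕ → ℤ) : Set ℕ :=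
  {i | 1 ≤ i ∧ i + 1 ≤ n ∧ v i < u (i + 1)} ∪ {n}

/-- `[p,q]` is one of the blocks `[p_s, q_s]` determined by `C`: `q ∈ C`,
no element of `C` lies in `[p, q-1]`, and either `p = 1` or `p - 1 ∈ C`. -/
def IsBlock (n : ℕ) (u v : ℕ → ℤ) (p q : ℕ) : Prop :=
  1 ≤ p ∧ p ≤ q ∧ q ≤ n ∧ inC n u v q ∧
    (∀ j, p ≤ j → j < q → ¬ inC n u v j) ∧ (p = 1 ∨ inC n u v (p - 1))

/-- `i0 = min { i ∈ [p,q] : ε_i > 1 }` (with the convention `ε_n > 1`). -/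
def IsBlockMin (n : ℕ) (u : ℕ → ℤ) (p q i0 : ℕ) : Prop :=
  p ≤ i0 ∧ i0 ≤ q ∧ epsGt1 u n i0 ∧ ∀ j, p ≤ j → j < i0 → ¬ epsGt1 u n j

/-- The comparability graph of a poset: two distinct elements are adjacent
iff they are comparable. -/
def compGraph (α : Type*) [Preorder α] : SimpleGraph α where
  Adj x y := x ≠ y ∧ (x ≤ y ∨ y ≤ x)
  symm := ⟨fun x y h => ⟨Ne.symm h.1, Or.symm h.2⟩⟩
  loopless := ⟨fun x h => h.1 rfl⟩

/-- A poset is pure if all of its maximal chains have the same cardinality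
(equivalently, the same length). -/
def IsPure (α : Type*) [Preorder α] : Prop :=
  ∀ A B : Set α, IsMaxChain (· ≤ ·) A → IsMaxChain (· ≤ ·) B → A.ncard = B.ncard

end LadderPaper

section MaxChain

variable {α : Type*} [PartialOrder α] {A : Set α} {a : α}

theorem isMin_subtype_iff {S : Set α} {x : S} : IsMin x ↔ Minimal (· ∈ S) (x : α) :=
  minimal_true.symm.trans minimal_true_subtype

theorem isMax_subtype_iff {S : Set α} {x : S} : IsMax x ↔ Maximal (· ∈ S) (x : α) :=
  maximal_true.symm.trans maximal_true_subtype

theorem IsMaxChain.mem_of_forall_comparable (hA : IsMaxChain (· ≤ ·) A)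
    (h : ∀ b ∈ A, a ≤ b ∨ b ≤ a) : a ∈ A := by
  rw [hA.2 (hA.1.insert fun b hb _ => h b hb) (Set.subset_insert a A)]
  exact Set.mem_insert a A

theorem IsMaxChain.nonempty [Nonempty α] (hA : IsMaxChain (· ≤ ·) A) : A.Nonempty := by
  obtain ⟨a⟩ := ‹Nonempty α›
  by_contra hempty
  exact hempty ⟨a, hA.mem_of_forall_comparable fun b hb => (hempty ⟨b, hb⟩).elim⟩

theorem IsMaxChain.exists_isMax_mem (hA : IsMaxChain (· ≤ ·) A) (hfin : A.Finite)
    (hne : A.Nonempty) : ∃ y ∈ A, IsMax y := by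
  obtain ⟨y, hyA, hy⟩ := hfin.exists_maximal hne
  have hle : ∀ b ∈ A, b ≤ y := fun b hb => (hA.1.total hb hyA).elim id (hy hb)
  exact ⟨y, hyA, fun c hyc =>
    hy (hA.mem_of_forall_comparable fun b hb => Or.inr ((hle b hb).trans hyc)) hyc⟩

theorem IsMaxChain.exists_isMin_mem (hA : IsMaxChain (· ≤ ·) A) (hfin : A.Finite)
    (hne : A.Nonempty) : ∃ x ∈ A, IsMin x :=
  IsMaxChain.exists_isMax_mem (α := αᵒᵈ) hA.symm hfin hne

theorem IsMaxChain.exists_covBy_of_not_isMin (hA : IsMaxChain (· ≤ ·) A) (hfin : A.Finite)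
    (ha : a ∈ A) (hmin : ¬ IsMin a) : ∃ b ∈ A, b ⋖ a ∧ ∀ c ∈ A, c < a → c ≤ b := by
  have hbelow : {c ∈ A | c < a}.Nonempty := by
    by_contra hempty
    obtain ⟨c, hca⟩ := not_isMin_iff.mp hmin
    refine hempty ⟨c, hA.mem_of_forall_comparable fun b hb => Or.inl ?_, hca⟩
    rcases hA.1.total hb ha with hba | hab
    · obtain rfl : b = a := by_contra fun hne => hempty ⟨b, hb, hba.lt_of_ne hne⟩
      exact hca.le
    · exact hca.le.trans hab
  obtain ⟨b, ⟨hbA, hba⟩, hbmax⟩ := (hfin.subset (Set.sep_subset _ _)).exists_maximal hbelow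
  have hle : ∀ c ∈ A, c < a → c ≤ b := fun c hc hca =>
    (hA.1.total hc hbA).elim id fun hbc => hbmax ⟨hc, hca⟩ hbc
  refine ⟨b, hbA, ⟨hba, fun z hbz hza => ?_⟩, hle⟩
  have hzA : z ∈ A := hA.mem_of_forall_comparable fun d hd => by
    rcases hA.1.total hd ha with hda | had
    · rcases hda.lt_or_eq with hda | rfl
      · exact Or.inr ((hle d hd hda).trans hbz.le)
      · exact Or.inl hza.le
    · exact Or.inl (hza.le.trans had)
  exact (hle z hzA hza).not_gt hbz

variable [Finite α] (ρ : α → ℤ)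

theorem IsMaxChain.ncard_le_eq (hρ : ∀ a b, a ⋖ b → ρ b = ρ a + 1) (hA : IsMaxChain (· ≤ ·) A)
    {x : α} (hxA : x ∈ A) (hx : IsMin x) (ha : a ∈ A) :
    ({b ∈ A | b ≤ a}.ncard : ℤ) = ρ a - ρ x + 1 := by
  induction a using WellFoundedLT.induction with
  | _ a ih =>
    by_cases hmin : IsMin a
    · obtain rfl : x = a := (hA.1.total hxA ha).elim (fun h => h.antisymm (hmin h))
        fun h => (hx h).antisymm h
      have hset : {b ∈ A | b ≤ x} = {x} :=
        Set.eq_singleton_iff_unique_mem.mpr ⟨⟨hxA, le_rfl⟩, fun b hb => hb.2.antisymm (hx hb.2)⟩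
      simp [hset]
    · obtain ⟨b, hbA, hba, hpred⟩ := hA.exists_covBy_of_not_isMin A.toFinite ha hmin
      have hset : {c ∈ A | c ≤ a} = insert a {c ∈ A | c ≤ b} := by
        ext c
        simp only [Set.mem_ofPred_eq, Set.mem_insert_iff]
        constructor
        · rintro ⟨hcA, hca⟩
          exact hca.lt_or_eq.symm.imp id fun hca => ⟨hcA, hpred c hcA hca⟩
        · rintro (rfl | ⟨hcA, hcb⟩)
          · exact ⟨ha, le_rfl⟩
          · exact ⟨hcA, hcb.trans hba.le⟩
      rw [hset, Set.ncard_insert_of_notMem, Nat.cast_succ, ih b hba.lt hbA, hρ b a hba]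
      · ring
      · exact fun h => h.2.not_gt hba.lt

theorem IsMaxChain.ncard_eq (hρ : ∀ a b, a ⋖ b → ρ b = ρ a + 1) (hA : IsMaxChain (· ≤ ·) A)
    {x y : α} (hxA : x ∈ A) (hx : IsMin x) (hyA : y ∈ A) (hy : IsMax y) :
    (A.ncard : ℤ) = ρ y - ρ x + 1 := by
  have hA_le : {b ∈ A | b ≤ y} = A :=
    Set.sep_eq_self_iff_mem_true.mpr fun b hb => (hA.1.total hb hyA).elim id (hy ·)
  rw [← hA.ncard_le_eq ρ hρ hxA hx hyA, hA_le]

end MaxChain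

namespace LadderPaper

theorem isPure_iff_rank_sub_eq {α : Type*} [PartialOrder α] [Finite α] (ρ : α → ℤ)
    (hρ : ∀ a b, a ⋖ b → ρ b = ρ a + 1) {x₀ y₀ : α}
    (hx₀ : IsMin x₀) (hy₀ : IsMax y₀) (h₀ : x₀ ≤ y₀) :
    IsPure α ↔ ∀ x y, IsMin x → IsMax y → x ≤ y → ρ y - ρ x = ρ y₀ - ρ x₀ := by
  have : Nonempty α := ⟨x₀⟩
  have hchain : ∀ {x y : α}, x ≤ y → ∃ A, IsMaxChain (· ≤ ·) A ∧ x ∈ A ∧ y ∈ A := fun hxy =>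
    let ⟨A, hA, hsub⟩ := (IsChain.pair hxy).exists_maxChain
    ⟨A, hA, hsub (Set.mem_insert _ _), hsub (Set.mem_insert_of_mem _ rfl)⟩
  obtain ⟨A₀, hA₀, hx₀A, hy₀A⟩ := hchain h₀
  constructor
  · intro hpure x y hx hy hxy
    obtain ⟨A, hA, hxA, hyA⟩ := hchain hxy
    have := hpure A A₀ hA hA₀
    have := hA.ncard_eq ρ hρ hxA hx hyA hy
    have := hA₀.ncard_eq ρ hρ hx₀A hx₀ hy₀A hy₀
    omega
  · intro hrank
    have hcard : ∀ A : Set α, IsMaxChain (· ≤ ·) A → (A.ncard : ℤ) = ρ y₀ - ρ x₀ + 1 := by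
      intro A hA
      obtain ⟨x, hxA, hx⟩ := hA.exists_isMin_mem A.toFinite hA.nonempty
      obtain ⟨y, hyA, hy⟩ := hA.exists_isMax_mem A.toFinite hA.nonempty
      rw [hA.ncard_eq ρ hρ hxA hx hyA hy,
        hrank x y hx hy ((hA.1.total hxA hyA).elim id (hx ·))]
    intro A B hA hB
    exact_mod_cast (hcard A hA).trans (hcard B hB).symm

section Ladder

variable {n : ℕ} {u v : ℕ → ℤ} {r : ℤ}

theorem sub_le_sub_of_lt_succ {w : ℕ → ℤ} (hw : ∀ i, 1 ≤ i → i + 1 ≤ n → w i < w (i + 1))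
    {a b : ℕ} (ha : 1 ≤ a) (hab : a ≤ b) (hbn : b ≤ n) : (b : ℤ) - a ≤ w b - w a := by
  induction b, hab using Nat.le_induction with
  | base => simp
  | succ b hab ih =>
    have := hw b (by omega) hbn
    push_cast
    linarith [ih (by omega)]

theorem atuple_apply {i t : ℕ} {j : ℤ} (ht : 1 ≤ t) (htn : t ≤ n) :
    atuple u n i j t = if t < i then u t else max (j + ((t : ℤ) - i)) (u t) := by
  simp [atuple, ht, htn]

theorem atuple_apply_self {i : ℕ} {j : ℤ} (hi : 1 ≤ i) (hin : i ≤ n) (hj : u i < j) :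
    atuple u n i j i = j := by
  simp [atuple_apply hi hin, hj.le]

theorem utuple_apply {t : ℕ} (ht : 1 ≤ t) (htn : t ≤ n) : utuple u n t = u t := by
  simp [utuple, ht, htn]

theorem atuple_le_atuple_iff {i k : ℕ} {j l : ℤ} (hi : 1 ≤ i) (hin : i ≤ n)
    (hj : u i < j) : atuple u n i j ≤ atuple u n k l ↔ k ≤ i ∧ j + k ≤ l + i := by
  constructor
  · intro h
    have hi' : atuple u n i j i ≤ atuple u n k l i := h i
    rw [atuple_apply_self hi hin hj, atuple_apply hi hin] at hi'
    split_ifs at hi' with hik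
    · omega
    · rcases le_max_iff.mp hi' with h | h <;> omega
  · rintro ⟨hki, hjl⟩ t
    show atuple u n i j t ≤ atuple u n k l t
    by_cases ht : 1 ≤ t ∧ t ≤ n
    · rw [atuple_apply ht.1 ht.2, atuple_apply ht.1 ht.2]
      split_ifs <;> omega
    · simp [atuple, ht]

theorem not_atuple_le_utuple {i : ℕ} {j : ℤ} (hi : 1 ≤ i) (hin : i ≤ n) (hj : u i < j) :
    ¬ atuple u n i j ≤ utuple u n := fun h => by
  have : atuple u n i j i ≤ utuple u n i := h i
  rw [atuple_apply_self hi hin hj, utuple_apply hi hin] at this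
  omega

theorem atuple_lt_atuple_iff {i k : ℕ} {j l : ℤ} (hi : 1 ≤ i) (hin : i ≤ n) (hk : 1 ≤ k)
    (hkn : k ≤ n) (hj : u i < j) (hl : u k < l) :
    atuple u n i j < atuple u n k l ↔ k ≤ i ∧ j + k ≤ l + i ∧ j - 2 * i < l - 2 * k := by
  rw [lt_iff_le_not_ge, atuple_le_atuple_iff hi hin hj, atuple_le_atuple_iff hk hkn hl]
  omega

theorem atuple_mem_PLr {i : ℕ} {j : ℤ} (hi : 1 ≤ i) (hin : i ≤ n) (hij : u i < j)
    (hjv : j ≤ v i) : (atuple u n i j, 1) ∈ PLr n u v r :=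
  Or.inl ⟨⟨i, j, hi, hin, hij, hjv, rfl⟩, rfl⟩

theorem utuple_mem_PLr {c : ℤ} (hc : 2 ≤ c) (hcr : c ≤ r) : (utuple u n, c) ∈ PLr n u v r :=
  Or.inr ⟨rfl, hc, hcr⟩

theorem mem_PLr_cases {x : (ℕ → ℤ) × ℤ} (hx : x ∈ PLr n u v r) :
    (∃ i j, 1 ≤ i ∧ i ≤ n ∧ u i < j ∧ j ≤ v i ∧ x = (atuple u n i j, 1)) ∨
      ∃ c, 2 ≤ c ∧ c ≤ r ∧ x = (utuple u n, c) := by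
  obtain ⟨⟨i, j, hi, hin, hij, hjv, hx1⟩, hx2⟩ | ⟨hx1, hc, hcr⟩ := hx
  · exact Or.inl ⟨i, j, hi, hin, hij, hjv, Prod.ext hx1 hx2⟩
  · exact Or.inr ⟨x.2, hc, hcr, Prod.ext hx1 rfl⟩

/-- Recovers `(i, j)` from `a_{i,j}` and returns `j - 2i`: the covers of `a_{i,j}` in `P_𝓛` are
`a_{i,j+1}` and `a_{i-1,j-1}`. -/
noncomputable def rank (n : ℕ) (u : ℕ → ℤ) (x : (ℕ → ℤ) × ℤ) : ℤ :=
  open Classical in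
  if h : ∃ p : ℕ × ℤ, (1 ≤ p.1 ∧ p.1 ≤ n ∧ u p.1 < p.2) ∧ x.1 = atuple u n p.1 p.2
  then h.choose.2 - 2 * h.choose.1 else x.2

theorem rank_atuple {i : ℕ} {j c : ℤ} (hi : 1 ≤ i) (hin : i ≤ n) (hij : u i < j) :
    rank n u (atuple u n i j, c) = j - 2 * i := by
  have hex : ∃ p : ℕ × ℤ, (1 ≤ p.1 ∧ p.1 ≤ n ∧ u p.1 < p.2) ∧
      atuple u n i j = atuple u n p.1 p.2 := ⟨(i, j), ⟨hi, hin, hij⟩, rfl⟩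
  obtain ⟨⟨hk, hkn, hkl⟩, heq⟩ := hex.choose_spec
  have h₁ := (atuple_le_atuple_iff hi hin hij).mp heq.le
  have h₂ := (atuple_le_atuple_iff hk hkn hkl).mp heq.ge
  rw [rank, dif_pos hex]
  omega

theorem rank_utuple {c : ℤ} : rank n u (utuple u n, c) = c := by
  rw [rank, dif_neg]
  rintro ⟨p, ⟨hp, hpn, hpu⟩, heq⟩
  exact not_atuple_le_utuple hp hpn hpu heq.ge

theorem not_mk_atuple_le_mk_utuple {i : ℕ} {j c d : ℤ} (hi : 1 ≤ i) (hin : i ≤ n)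
    (hij : u i < j) : ¬ (atuple u n i j, c) ≤ (utuple u n, d) :=
  fun h => not_atuple_le_utuple hi hin hij h.1

theorem not_mk_utuple_le_mk_one {w : ℕ → ℤ} {c : ℤ} (hc : 2 ≤ c) : ¬ (utuple u n, c) ≤ (w, 1) :=
  fun h => by have : c ≤ 1 := h.2; omega

theorem rank_lt_rank {x y : (ℕ → ℤ) × ℤ} (hx : x ∈ PLr n u v r) (hy : y ∈ PLr n u v r)
    (hxy : x < y) : rank n u x < rank n u y := by
  obtain ⟨i, j, hi, hin, hij, -, rfl⟩ | ⟨c, hc, -, rfl⟩ := mem_PLr_cases hx <;>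
  obtain ⟨k, l, hk, hkn, hkl, -, rfl⟩ | ⟨d, hd, -, rfl⟩ := mem_PLr_cases hy
  · have := (atuple_lt_atuple_iff hi hin hk hkn hij hkl).mp (Prod.mk_lt_mk_iff_left.mp hxy)
    rw [rank_atuple hi hin hij, rank_atuple hk hkn hkl]
    exact this.2.2
  · exact absurd hxy.le (not_mk_atuple_le_mk_utuple hi hin hij)
  · exact absurd hxy.le (not_mk_utuple_le_mk_one hc)
  · rw [rank_utuple, rank_utuple]
    exact Prod.mk_lt_mk_iff_right.mp hxy

theorem exists_mem_PLr_between (humono : ∀ i, 1 ≤ i → i + 1 ≤ n → u i < u (i + 1))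
    (hvmono : ∀ i, 1 ≤ i → i + 1 ≤ n → v i < v (i + 1))
    {x y : (ℕ → ℤ) × ℤ} (hx : x ∈ PLr n u v r) (hy : y ∈ PLr n u v r)
    (hxy : x < y) (hgap : rank n u x + 1 < rank n u y) :
    ∃ z ∈ PLr n u v r, x < z ∧ z < y := by
  obtain ⟨i, j, hi, hin, hij, hjv, rfl⟩ | ⟨c, hc, hcr, rfl⟩ := mem_PLr_cases hx <;>
  obtain ⟨k, l, hk, hkn, hkl, hlv, rfl⟩ | ⟨d, hd, hdr, rfl⟩ := mem_PLr_cases hy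
  · rw [rank_atuple hi hin hij, rank_atuple hk hkn hkl] at hgap
    obtain ⟨hki, hjl, -⟩ :=
      (atuple_lt_atuple_iff hi hin hk hkn hij hkl).mp (Prod.mk_lt_mk_iff_left.mp hxy)
    rcases hki.eq_or_lt with rfl | hki
    · refine ⟨_, atuple_mem_PLr hi hin (by omega : u k < j + 1) (by omega),
        Prod.mk_lt_mk_iff_left.mpr ?_, Prod.mk_lt_mk_iff_left.mpr ?_⟩
      · rw [atuple_lt_atuple_iff hi hin hi hin hij (by omega)]; omega
      · rw [atuple_lt_atuple_iff hi hin hi hin (by omega) hkl]; omega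
    · have hu := humono (i - 1) (by omega) (by omega)
      have hv := sub_le_sub_of_lt_succ hvmono hk (by omega : k ≤ i - 1) (by omega)
      rw [Nat.sub_add_cancel (by omega)] at hu
      push_cast [Nat.cast_sub (by omega : 1 ≤ i)] at hv
      refine ⟨_, atuple_mem_PLr (by omega : 1 ≤ i - 1) (by omega) (by omega : u (i - 1) < j - 1)
        (by omega), Prod.mk_lt_mk_iff_left.mpr ?_, Prod.mk_lt_mk_iff_left.mpr ?_⟩
      · rw [atuple_lt_atuple_iff hi hin (by omega) (by omega) hij (by omega)]; omega
      · rw [atuple_lt_atuple_iff (by omega) (by omega) hk hkn (by omega) hkl]; omega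
  · exact absurd hxy.le (not_mk_atuple_le_mk_utuple hi hin hij)
  · exact absurd hxy.le (not_mk_utuple_le_mk_one hc)
  · rw [rank_utuple, rank_utuple] at hgap
    exact ⟨_, utuple_mem_PLr (by omega : 2 ≤ c + 1) (by omega),
      Prod.mk_lt_mk_iff_right.mpr (by omega), Prod.mk_lt_mk_iff_right.mpr (by omega)⟩

theorem rank_covBy (humono : ∀ i, 1 ≤ i → i + 1 ≤ n → u i < u (i + 1))
    (hvmono : ∀ i, 1 ≤ i → i + 1 ≤ n → v i < v (i + 1)) {x y : PLr n u v r} (h : x ⋖ y) :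
    rank n u y = rank n u x + 1 := by
  have hlt := rank_lt_rank x.2 y.2 h.lt
  by_contra hne
  obtain ⟨z, hz, hxz, hzy⟩ := exists_mem_PLr_between humono hvmono x.2 y.2 h.lt (by omega)
  exact h.2 (c := ⟨z, hz⟩) hxz hzy

theorem minimal_atuple_iff (humono : ∀ i, 1 ≤ i → i + 1 ≤ n → u i < u (i + 1))
    (huv : ∀ i, 1 ≤ i → i ≤ n → u i < v i) {i : ℕ} {j : ℤ} (hi : 1 ≤ i) (hin : i ≤ n)
    (hij : u i < j) (hjv : j ≤ v i) :
    Minimal (· ∈ PLr n u v r) (atuple u n i j, 1) ↔ j = u i + 1 ∧ epsGt1 u n i := by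
  constructor
  · intro h
    have hj : j = u i + 1 := by
      by_contra hne
      have hle := h.2 (atuple_mem_PLr hi hin (j := j - 1) (by omega) (by omega))
        (Prod.mk_le_mk.mpr ⟨(atuple_le_atuple_iff hi hin (by omega)).mpr ⟨le_rfl, by omega⟩,
          le_rfl⟩)
      have := ((atuple_le_atuple_iff hi hin hij).mp hle.1).2
      omega
    refine ⟨hj, ?_⟩
    by_contra heps
    simp only [epsGt1, not_or, not_lt] at heps
    have hu := humono i hi (by omega)
    have huv' := huv (i + 1) (by omega) (by omega)
    have hle := h.2 (atuple_mem_PLr (i := i + 1) (j := u i + 2) (by omega) (by omega) (by omega)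
        (by omega))
      (Prod.mk_le_mk.mpr ⟨(atuple_le_atuple_iff (by omega) (by omega) (by omega)).mpr
        ⟨by omega, by push_cast; omega⟩, le_rfl⟩)
    have := ((atuple_le_atuple_iff hi hin hij).mp hle.1).1
    omega
  · rintro ⟨rfl, heps⟩
    refine ⟨atuple_mem_PLr hi hin hij hjv, fun y hy hyx => ?_⟩
    obtain ⟨k, l, hk, hkn, hkl, -, rfl⟩ | ⟨c, hc, -, rfl⟩ := mem_PLr_cases hy
    · obtain ⟨hik, hl⟩ := (atuple_le_atuple_iff hk hkn hkl).mp hyx.1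
      obtain rfl : k = i := by
        by_contra hne
        rcases heps with rfl | heps
        · omega
        · have := sub_le_sub_of_lt_succ humono (by omega : 1 ≤ i + 1) (by omega : i + 1 ≤ k) hkn
          push_cast at this
          omega
      obtain rfl : l = u k + 1 := by omega
      exact le_rfl
    · exact absurd hyx (not_mk_utuple_le_mk_one hc)

theorem maximal_atuple_iff (hvmono : ∀ i, 1 ≤ i → i + 1 ≤ n → v i < v (i + 1))
    (huv : ∀ i, 1 ≤ i → i ≤ n → u i < v i) {i : ℕ} {j : ℤ} (hi : 1 ≤ i) (hin : i ≤ n)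
    (hij : u i < j) (hjv : j ≤ v i) :
    Maximal (· ∈ PLr n u v r) (atuple u n i j, 1) ↔ j = v i ∧ thetaGt1 v i := by
  constructor
  · intro h
    have hj : j = v i := by
      by_contra hne
      have hle := h.2 (atuple_mem_PLr hi hin (j := j + 1) (by omega) (by omega))
        (Prod.mk_le_mk.mpr ⟨(atuple_le_atuple_iff hi hin hij).mpr ⟨le_rfl, by omega⟩, le_rfl⟩)
      have := ((atuple_le_atuple_iff hi hin (by omega)).mp hle.1).2
      omega
    refine ⟨hj, ?_⟩
    by_contra htheta
    simp only [thetaGt1, not_or, not_lt] at htheta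
    have hv := hvmono (i - 1) (by omega) (by omega)
    have huv' := huv (i - 1) (by omega) (by omega)
    rw [Nat.sub_add_cancel hi] at hv
    have hle := h.2 (atuple_mem_PLr (i := i - 1) (j := v i - 1) (by omega) (by omega) (by omega)
        (by omega))
      (Prod.mk_le_mk.mpr ⟨(atuple_le_atuple_iff hi hin hij).mpr ⟨by omega, by omega⟩, le_rfl⟩)
    have := ((atuple_le_atuple_iff (by omega) (by omega) (by omega)).mp hle.1).1
    omega
  · rintro ⟨rfl, htheta⟩
    refine ⟨atuple_mem_PLr hi hin hij hjv, fun y hy hxy => ?_⟩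
    obtain ⟨k, l, hk, hkn, hkl, hlv, rfl⟩ | ⟨c, -, -, rfl⟩ := mem_PLr_cases hy
    · obtain ⟨hki, hl⟩ := (atuple_le_atuple_iff hi hin hij).mp hxy.1
      obtain rfl : k = i := by
        by_contra hne
        rcases htheta with rfl | htheta
        · omega
        · have := sub_le_sub_of_lt_succ hvmono hk (by omega : k ≤ i - 1) (by omega)
          push_cast [Nat.cast_sub hi] at this
          omega
      obtain rfl : l = v k := by omega
      exact le_rfl
    · exact absurd hxy (not_mk_atuple_le_mk_utuple hi hin hij)

theorem minimal_utuple_iff {c : ℤ} (hc : 2 ≤ c) (hcr : c ≤ r) :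
    Minimal (· ∈ PLr n u v r) (utuple u n, c) ↔ c = 2 := by
  constructor
  · intro h
    by_contra hne
    have : c ≤ c - 1 :=
      (h.2 (utuple_mem_PLr (by omega) (by omega)) (Prod.mk_le_mk.mpr ⟨le_rfl, by omega⟩)).2
    omega
  · rintro rfl
    refine ⟨utuple_mem_PLr le_rfl hcr, fun y hy hyx => ?_⟩
    obtain ⟨k, l, hk, hkn, hkl, -, rfl⟩ | ⟨d, hd, -, rfl⟩ := mem_PLr_cases hy
    · exact absurd hyx (not_mk_atuple_le_mk_utuple hk hkn hkl)
    · have : d ≤ 2 := hyx.2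
      exact Prod.mk_le_mk.mpr ⟨le_rfl, by omega⟩

theorem maximal_utuple_iff {c : ℤ} (hc : 2 ≤ c) (hcr : c ≤ r) :
    Maximal (· ∈ PLr n u v r) (utuple u n, c) ↔ c = r := by
  constructor
  · intro h
    by_contra hne
    have : c + 1 ≤ c :=
      (h.2 (utuple_mem_PLr (by omega) (by omega)) (Prod.mk_le_mk.mpr ⟨le_rfl, by omega⟩)).2
    omega
  · rintro rfl
    refine ⟨utuple_mem_PLr hc le_rfl, fun y hy hxy => ?_⟩
    obtain ⟨k, l, -, -, -, -, rfl⟩ | ⟨d, -, hdr, rfl⟩ := mem_PLr_cases hy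
    · exact absurd hxy (not_mk_utuple_le_mk_one hc)
    · have : c ≤ d := hxy.2
      exact Prod.mk_le_mk.mpr ⟨le_rfl, by omega⟩

theorem PLr_finite : (PLr n u v r).Finite := by
  refine (((Set.finite_Icc 1 n).biUnion fun i _ =>
    (Set.finite_Icc (u i + 1) (v i)).image fun j => (atuple u n i j, (1 : ℤ))).union
    ((Set.finite_Icc 2 r).image fun c => (utuple u n, c))).subset fun x hx => ?_
  obtain ⟨i, j, hi, hin, hij, hjv, rfl⟩ | ⟨c, hc, hcr, rfl⟩ := mem_PLr_cases hx
  · exact Or.inl (Set.mem_biUnion (Set.mem_Icc.mpr ⟨hi, hin⟩) ⟨j, Set.mem_Icc.mpr ⟨hij, hjv⟩, rfl⟩)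
  · exact Or.inr ⟨c, Set.mem_Icc.mpr ⟨hc, hcr⟩, rfl⟩

def minRank (u : ℕ → ℤ) (k : ℕ) : ℤ := u k + 1 - 2 * k

def maxRank (v : ℕ → ℤ) (i : ℕ) : ℤ := v i - 2 * i

/-- `a_{k,u_k+1}` and `a_{i,v_i}` run over the minimal and maximal elements of `P_𝓛`; they are
comparable exactly when `i ≤ k` and `u_k + 1 + i ≤ v_i + k`, and their ranks are `minRank u k`
and `maxRank v i`. -/
def RankGapEq (n : ℕ) (u v : ℕ → ℤ) (d : ℤ) : Prop :=
  ∀ i k : ℕ, 1 ≤ i → i ≤ k → k ≤ n → thetaGt1 v i → epsGt1 u n k →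
    u k + 1 + i ≤ v i + k → maxRank v i - minRank u k = d

theorem rankGapEq_iff_forall_minimal_maximal
    (humono : ∀ i, 1 ≤ i → i + 1 ≤ n → u i < u (i + 1))
    (hvmono : ∀ i, 1 ≤ i → i + 1 ≤ n → v i < v (i + 1))
    (huv : ∀ i, 1 ≤ i → i ≤ n → u i < v i) :
    RankGapEq n u v (r - 2) ↔ ∀ x y, Minimal (· ∈ PLr n u v r) x →
      Maximal (· ∈ PLr n u v r) y → x ≤ y → rank n u y - rank n u x = r - 2 := by
  constructor
  · intro hgap x y hx hy hxy
    obtain ⟨k, j, hk, hkn, hkj, hjv, rfl⟩ | ⟨c, hc, hcr, rfl⟩ := mem_PLr_cases hx.1 <;>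
    obtain ⟨i, l, hi, hin, hil, hlv, rfl⟩ | ⟨d, hd, hdr, rfl⟩ := mem_PLr_cases hy.1
    · obtain ⟨rfl, heps⟩ := (minimal_atuple_iff humono huv hk hkn hkj hjv).mp hx
      obtain ⟨rfl, htheta⟩ := (maximal_atuple_iff hvmono huv hi hin hil hlv).mp hy
      obtain ⟨hik, hcomp⟩ := (atuple_le_atuple_iff hk hkn hkj).mp hxy.1
      have := hgap i k hi hik hkn htheta heps (by omega)
      rw [rank_atuple hk hkn hkj, rank_atuple hi hin hil]
      simp only [minRank, maxRank] at this
      omega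
    · exact absurd hxy (not_mk_atuple_le_mk_utuple hk hkn hkj)
    · exact absurd hxy (not_mk_utuple_le_mk_one hc)
    · rw [(minimal_utuple_iff hc hcr).mp hx, (maximal_utuple_iff hd hdr).mp hy, rank_utuple,
        rank_utuple]
  · intro hrank i k hi hik hkn htheta heps hcomp
    have hk : 1 ≤ k := hi.trans hik
    have hin : i ≤ n := hik.trans hkn
    have hu := huv k hk hkn
    have hv := huv i hi hin
    have := hrank _ _
      ((minimal_atuple_iff humono huv hk hkn (lt_add_one _) (by omega)).mpr ⟨rfl, heps⟩)
      ((maximal_atuple_iff hvmono huv hi hin hv le_rfl).mpr ⟨rfl, htheta⟩)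
      (Prod.mk_le_mk.mpr ⟨(atuple_le_atuple_iff hk hkn (lt_add_one _)).mpr ⟨hik, hcomp⟩, le_rfl⟩)
    rw [rank_atuple hk hkn (lt_add_one _), rank_atuple hi hin hv] at this
    simp only [minRank, maxRank]
    omega

theorem isPure_iff_rankGapEq (humono : ∀ i, 1 ≤ i → i + 1 ≤ n → u i < u (i + 1))
    (hvmono : ∀ i, 1 ≤ i → i + 1 ≤ n → v i < v (i + 1))
    (huv : ∀ i, 1 ≤ i → i ≤ n → u i < v i) (hr : 2 ≤ r) :
    IsPure (PLr n u v r) ↔ RankGapEq n u v (r - 2) := by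
  have : Finite (PLr n u v r) := PLr_finite.to_subtype
  have hbot : IsMin (⟨_, utuple_mem_PLr le_rfl hr⟩ : PLr n u v r) :=
    isMin_subtype_iff.mpr ((minimal_utuple_iff le_rfl hr).mpr rfl)
  have htop : IsMax (⟨_, utuple_mem_PLr hr le_rfl⟩ : PLr n u v r) :=
    isMax_subtype_iff.mpr ((maximal_utuple_iff hr le_rfl).mpr rfl)
  rw [isPure_iff_rank_sub_eq (fun x : PLr n u v r => rank n u x)
    (fun _ _ => rank_covBy humono hvmono) hbot htop (Prod.mk_le_mk.mpr ⟨le_rfl, hr⟩),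
    rankGapEq_iff_forall_minimal_maximal humono hvmono huv]
  simp only [Subtype.forall, isMin_subtype_iff, isMax_subtype_iff, Subtype.mk_le_mk, rank_utuple]
  exact ⟨fun h x y hx hy => h x hx.1 y hy.1 hx hy, fun h x _ y _ => h x y⟩

end Ladder

section Blocks

variable {n : ℕ} {u v : ℕ → ℤ} {p q : ℕ}

theorem sub_eq_of_forall_not_epsGt1 (humono : ∀ i, 1 ≤ i → i + 1 ≤ n → u i < u (i + 1))
    {a b : ℕ} (ha : 1 ≤ a) (hab : a ≤ b) (hbn : b ≤ n)
    (h : ∀ j, a ≤ j → j < b → ¬ epsGt1 u n j) : u b - u a = b - a := by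
  induction b, hab using Nat.le_induction with
  | base => simp
  | succ b hab ih =>
    have hb := h b hab (lt_add_one b)
    simp only [epsGt1, not_or, not_lt] at hb
    have := humono b (by omega) hbn
    have := ih (by omega) fun j hj hjb => h j hj (by omega)
    push_cast
    omega

theorem sub_eq_of_forall_not_thetaGt1 (hvmono : ∀ i, 1 ≤ i → i + 1 ≤ n → v i < v (i + 1))
    {a b : ℕ} (ha : 1 ≤ a) (hab : a ≤ b) (hbn : b ≤ n)
    (h : ∀ j, a < j → j ≤ b → ¬ thetaGt1 v j) : v b - v a = b - a := by
  induction b, hab using Nat.le_induction with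
  | base => simp
  | succ b hab ih =>
    have hb := h (b + 1) (by omega) le_rfl
    simp only [thetaGt1, not_or, not_lt, Nat.add_sub_cancel] at hb
    have := hvmono b (by omega) hbn
    have := ih (by omega) fun j hj hjb => h j hj (by omega)
    push_cast
    omega

theorem IsBlock.thetaGt1_left (huv : ∀ i, 1 ≤ i → i ≤ n → u i < v i) (hb : IsBlock n u v p q) :
    thetaGt1 v p := by
  obtain ⟨hp, hpq, hqn, -, -, rfl | ⟨-, -, hgap⟩ | hpn⟩ := hb
  · exact Or.inl rfl
  · rw [Nat.sub_add_cancel hp] at hgap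
    have := huv p hp (by omega)
    exact Or.inr (by omega)
  · omega

theorem IsBlock.epsGt1_right (huv : ∀ i, 1 ≤ i → i ≤ n → u i < v i) (hb : IsBlock n u v p q) :
    epsGt1 u n q := by
  obtain ⟨hp, hpq, hqn, ⟨-, -, hgap⟩ | rfl, -⟩ := hb
  · have := huv q (by omega) hqn
    exact Or.inr (by omega)
  · exact Or.inl rfl

noncomputable def nextMinIndex (n : ℕ) (u : ℕ → ℤ) (j : ℕ) : ℕ := sInf {k | j ≤ k ∧ epsGt1 u n k}

noncomputable def prevMaxIndex (v : ℕ → ℤ) (j : ℕ) : ℕ := sSup {i | i ≤ j ∧ thetaGt1 v i}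

theorem nextMinIndex_le {j k : ℕ} (hjk : j ≤ k) (hk : epsGt1 u n k) : nextMinIndex n u j ≤ k :=
  Nat.sInf_le ⟨hjk, hk⟩

theorem le_nextMinIndex_and_epsGt1 {j k : ℕ} (hjk : j ≤ k) (hk : epsGt1 u n k) :
    j ≤ nextMinIndex n u j ∧ epsGt1 u n (nextMinIndex n u j) :=
  Nat.sInf_mem (s := {k | j ≤ k ∧ epsGt1 u n k}) ⟨k, hjk, hk⟩

theorem nextMinIndex_eq_self {k : ℕ} (hk : epsGt1 u n k) : nextMinIndex n u k = k :=
  (nextMinIndex_le le_rfl hk).antisymm (le_nextMinIndex_and_epsGt1 le_rfl hk).1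

theorem sub_nextMinIndex (humono : ∀ i, 1 ≤ i → i + 1 ≤ n → u i < u (i + 1)) {j : ℕ}
    (hj : 1 ≤ j) (hjn : j ≤ n) :
    u (nextMinIndex n u j) - u j = (nextMinIndex n u j : ℤ) - j :=
  sub_eq_of_forall_not_epsGt1 humono hj (le_nextMinIndex_and_epsGt1 hjn (Or.inl rfl)).1
    (nextMinIndex_le hjn (Or.inl rfl)) fun _ hjl hl h => Nat.notMem_of_lt_sInf hl ⟨hjl, h⟩

theorem bddAbove_thetaGt1 (j : ℕ) : BddAbove {i | i ≤ j ∧ thetaGt1 v i} :=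
  ⟨j, fun _ hi => hi.1⟩

theorem le_prevMaxIndex {i j : ℕ} (hij : i ≤ j) (hi : thetaGt1 v i) : i ≤ prevMaxIndex v j :=
  le_csSup (bddAbove_thetaGt1 j) ⟨hij, hi⟩

theorem prevMaxIndex_le_and_thetaGt1 {j : ℕ} (hj : 1 ≤ j) :
    prevMaxIndex v j ≤ j ∧ thetaGt1 v (prevMaxIndex v j) :=
  Nat.sSup_mem (s := {i | i ≤ j ∧ thetaGt1 v i}) ⟨1, hj, Or.inl rfl⟩ (bddAbove_thetaGt1 j)

theorem prevMaxIndex_eq_self {i : ℕ} (hi : thetaGt1 v i) : prevMaxIndex v i = i :=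
  (csSup_le (s := {i' | i' ≤ i ∧ thetaGt1 v i'}) ⟨i, le_rfl, hi⟩ fun _ h => h.1).antisymm
    (le_prevMaxIndex le_rfl hi)

theorem sub_prevMaxIndex (hvmono : ∀ i, 1 ≤ i → i + 1 ≤ n → v i < v (i + 1)) {j : ℕ}
    (hj : 1 ≤ j) (hjn : j ≤ n) (hM : 1 ≤ prevMaxIndex v j) :
    v j - v (prevMaxIndex v j) = (j : ℤ) - prevMaxIndex v j :=
  sub_eq_of_forall_not_thetaGt1 hvmono hM (prevMaxIndex_le_and_thetaGt1 hj).1 hjn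
    fun _ hl hlj h => (le_prevMaxIndex hlj h).not_gt hl

theorem IsBlock.isBlockMin_nextMinIndex (huv : ∀ i, 1 ≤ i → i ≤ n → u i < v i)
    (hb : IsBlock n u v p q) : IsBlockMin n u p q (nextMinIndex n u p) :=
  have hq := hb.epsGt1_right huv
  ⟨(le_nextMinIndex_and_epsGt1 hb.2.1 hq).1, nextMinIndex_le hb.2.1 hq,
    (le_nextMinIndex_and_epsGt1 hb.2.1 hq).2, fun _ hpj hj h => (nextMinIndex_le hpj h).not_gt hj⟩

theorem IsBlockMin.eq_nextMinIndex {i₀ : ℕ} (h : IsBlockMin n u p q i₀) :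
    i₀ = nextMinIndex n u p := by
  obtain ⟨hpi, -, hi₀, hmin⟩ := h
  obtain ⟨hpK, hK⟩ := le_nextMinIndex_and_epsGt1 hpi hi₀
  exact (not_lt.mp fun hlt => hmin _ hpK hlt hK).antisymm (nextMinIndex_le hpi hi₀)

/-- Inside a block, `a_{M,v_M}` with `M = prevMaxIndex v j` is comparable with `a_{K,u_K+1}` for
`K = nextMinIndex n u j'` when `j' = j` (as `u_j < v_j`) and when `j' = j + 1`
(as `u_{j+1} ≤ v_j`). -/
theorem RankGapEq.maxRank_prevMaxIndex_sub_minRank_nextMinIndex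
    (humono : ∀ i, 1 ≤ i → i + 1 ≤ n → u i < u (i + 1))
    (hvmono : ∀ i, 1 ≤ i → i + 1 ≤ n → v i < v (i + 1))
    (huv : ∀ i, 1 ≤ i → i ≤ n → u i < v i) {d : ℤ} (hgap : RankGapEq n u v d)
    (hb : IsBlock n u v p q) {j j' : ℕ} (hpj : p ≤ j) (hjj' : j ≤ j') (hj'j : j' ≤ j + 1)
    (hj'q : j' ≤ q) :
    maxRank v (prevMaxIndex v j) - minRank u (nextMinIndex n u j') = d := by
  have hpM := le_prevMaxIndex hpj (hb.thetaGt1_left huv)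
  obtain ⟨hp, -, hqn, -, hnoC, -⟩ := hb
  obtain ⟨hMj, hM⟩ := prevMaxIndex_le_and_thetaGt1 (v := v) (j := j) (by omega)
  obtain ⟨hjK, hK⟩ := le_nextMinIndex_and_epsGt1 (u := u) (j := j') (by omega : j' ≤ n) (Or.inl rfl)
  have hKn := nextMinIndex_le (u := u) (j := j') (by omega : j' ≤ n) (Or.inl rfl)
  have hv := sub_prevMaxIndex hvmono (by omega) (by omega) (by omega : 1 ≤ prevMaxIndex v j)
  have hu := sub_nextMinIndex humono (u := u) (j := j') (by omega) (by omega)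
  have hstep : u j' + 1 - j' ≤ v j - j := by
    rcases hj'j.eq_or_lt with rfl | hlt
    · have := hnoC j hpj (by omega)
      simp only [inC, not_or, not_and, not_lt] at this
      push_cast
      linarith [this.1 (by omega) (by omega)]
    · obtain rfl : j' = j := by omega
      linarith [huv j' (by omega) (by omega)]
  exact hgap _ _ (by omega) (by omega) hKn hM hK (by linarith)

theorem RankGapEq.maxRank_minRank_eq_of_isBlock
    (humono : ∀ i, 1 ≤ i → i + 1 ≤ n → u i < u (i + 1))
    (hvmono : ∀ i, 1 ≤ i → i + 1 ≤ n → v i < v (i + 1))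
    (huv : ∀ i, 1 ≤ i → i ≤ n → u i < v i) {d : ℤ} (hgap : RankGapEq n u v d)
    (hb : IsBlock n u v p q) {j : ℕ} (hpj : p ≤ j) (hjq : j ≤ q) :
    maxRank v (prevMaxIndex v j) = maxRank v p ∧
      minRank u (nextMinIndex n u j) = minRank u (nextMinIndex n u p) := by
  induction j, hpj using Nat.le_induction with
  | base => exact ⟨by rw [prevMaxIndex_eq_self (hb.thetaGt1_left huv)], rfl⟩
  | succ j hpj ih =>
    have h₀ := hgap.maxRank_prevMaxIndex_sub_minRank_nextMinIndex humono hvmono huv hb hpj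
      le_rfl (by omega) (by omega)
    have h₁ := hgap.maxRank_prevMaxIndex_sub_minRank_nextMinIndex humono hvmono huv hb hpj
      (by omega) le_rfl hjq
    have h₂ := hgap.maxRank_prevMaxIndex_sub_minRank_nextMinIndex humono hvmono huv hb
      (by omega : p ≤ j + 1) le_rfl (by omega) hjq
    have := ih (by omega)
    constructor <;> linarith

def BlockConditions (n : ℕ) (u v : ℕ → ℤ) (r : ℤ) (p q : ℕ) : Prop :=
  (∀ i k, p ≤ i → i ≤ k → k ≤ q → epsGt1 u n i → epsGt1 u n k →
      u k - u i = 2 * ((k : ℤ) - (i : ℤ))) ∧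
    (∀ i k, p ≤ i → i ≤ k → k ≤ q → thetaGt1 v i → thetaGt1 v k →
      v k - v i = 2 * ((k : ℤ) - (i : ℤ))) ∧
    (∀ i₀, IsBlockMin n u p q i₀ → r = (v p - u p) + (i₀ : ℤ) - (p : ℤ) + 1)

theorem RankGapEq.blockConditions (humono : ∀ i, 1 ≤ i → i + 1 ≤ n → u i < u (i + 1))
    (hvmono : ∀ i, 1 ≤ i → i + 1 ≤ n → v i < v (i + 1))
    (huv : ∀ i, 1 ≤ i → i ≤ n → u i < v i) {r : ℤ} (hgap : RankGapEq n u v (r - 2))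
    (hb : IsBlock n u v p q) : BlockConditions n u v r p q := by
  have hconst {j : ℕ} (hpj : p ≤ j) (hjq : j ≤ q) :=
    hgap.maxRank_minRank_eq_of_isBlock humono hvmono huv hb hpj hjq
  refine ⟨fun i k hpi hik hkq hi hk => ?_, fun i k hpi hik hkq hi hk => ?_, fun i₀ hi₀ => ?_⟩
  · have h₁ := (hconst hpi (by omega)).2
    have h₂ := (hconst (by omega) hkq).2
    rw [nextMinIndex_eq_self hi] at h₁
    rw [nextMinIndex_eq_self hk] at h₂
    simp only [minRank] at h₁ h₂
    linarith
  · have h₁ := (hconst hpi (by omega)).1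
    have h₂ := (hconst (by omega) hkq).1
    rw [prevMaxIndex_eq_self hi] at h₁
    rw [prevMaxIndex_eq_self hk] at h₂
    simp only [maxRank] at h₁ h₂
    linarith
  · have h := hgap.maxRank_prevMaxIndex_sub_minRank_nextMinIndex humono hvmono huv hb le_rfl
      le_rfl (by omega) hb.2.1
    rw [prevMaxIndex_eq_self (hb.thetaGt1_left huv), ← hi₀.eq_nextMinIndex] at h
    have hu := sub_nextMinIndex humono hb.1 (hb.2.1.trans hb.2.2.1)
    rw [← hi₀.eq_nextMinIndex] at hu
    simp only [minRank, maxRank] at h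
    linarith

theorem not_inC_of_le_of_lt (humono : ∀ i, 1 ≤ i → i + 1 ≤ n → u i < u (i + 1))
    (hvmono : ∀ i, 1 ≤ i → i + 1 ≤ n → v i < v (i + 1)) {i j k : ℕ} (hi : 1 ≤ i) (hij : i ≤ j)
    (hjk : j < k) (hkn : k ≤ n) (hcomp : u k + 1 + i ≤ v i + k) : ¬ inC n u v j := by
  rintro (⟨-, -, hj⟩ | rfl)
  · have hv := sub_le_sub_of_lt_succ hvmono hi hij (by omega)
    have hu := sub_le_sub_of_lt_succ humono (by omega : 1 ≤ j + 1) hjk hkn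
    push_cast at hu
    omega
  · omega

theorem exists_isBlock_of_forall_not_inC {i k : ℕ} (hi : 1 ≤ i) (hik : i ≤ k) (hkn : k ≤ n)
    (h : ∀ j, i ≤ j → j < k → ¬ inC n u v j) : ∃ p q, IsBlock n u v p q ∧ p ≤ i ∧ k ≤ q := by
  set S := {c | c < i ∧ inC n u v c}
  have hSbdd : BddAbove S := ⟨i, fun _ hc => hc.1.le⟩
  obtain ⟨hSi, hSC⟩ : sSup S < i ∧ (sSup S = 0 ∨ inC n u v (sSup S)) := by
    rcases S.eq_empty_or_nonempty with hS | hS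
    · rw [hS, csSup_empty]
      exact ⟨hi, Or.inl rfl⟩
    · exact (Nat.sSup_mem hS hSbdd).imp_right Or.inr
  set T := {c | k ≤ c ∧ inC n u v c}
  have hnT : n ∈ T := ⟨hkn, Or.inr rfl⟩
  obtain ⟨hkq, hq⟩ := Nat.sInf_mem ⟨n, hnT⟩
  refine ⟨sSup S + 1, sInf T, ⟨by omega, by omega, Nat.sInf_le hnT, hq,
    fun j hpj hjq hj => ?_, by simpa using hSC.imp_left (by omega)⟩, by omega, hkq⟩
  rcases lt_or_ge j i with hji | hij
  · exact (le_csSup hSbdd ⟨hji, hj⟩).not_gt hpj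
  rcases lt_or_ge j k with hjk | hkj
  · exact h j hij hjk hj
  · exact Nat.notMem_of_lt_sInf hjq ⟨hkj, hj⟩

theorem rankGapEq_of_blockConditions (humono : ∀ i, 1 ≤ i → i + 1 ≤ n → u i < u (i + 1))
    (hvmono : ∀ i, 1 ≤ i → i + 1 ≤ n → v i < v (i + 1))
    (huv : ∀ i, 1 ≤ i → i ≤ n → u i < v i) {r : ℤ}
    (h : ∀ p q, IsBlock n u v p q → BlockConditions n u v r p q) : RankGapEq n u v (r - 2) := by
  intro i k hi hik hkn htheta heps hcomp
  obtain ⟨p, q, hb, hpi, hkq⟩ := exists_isBlock_of_forall_not_inC hi hik hkn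
    fun j hij hjk => not_inC_of_le_of_lt humono hvmono hi hij hjk hkn hcomp
  obtain ⟨ha, hb', hc⟩ := h p q hb
  have hi₀ := hb.isBlockMin_nextMinIndex huv
  have h₁ := ha _ k hi₀.1 (nextMinIndex_le (hpi.trans hik) heps) hkq hi₀.2.2.1 heps
  have h₂ := hb' p i le_rfl hpi (hik.trans hkq) (hb.thetaGt1_left huv) htheta
  have h₃ := hc _ hi₀
  have hu := sub_nextMinIndex humono hb.1 (hb.2.1.trans hb.2.2.1)
  simp only [minRank, maxRank]
  linarith

end Blocks

theorem stmt16_general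
    (n : ℕ) (u v : ℕ → ℤ)
    (humono : ∀ i, 1 ≤ i → i + 1 ≤ n → u i < u (i + 1))
    (hvmono : ∀ i, 1 ≤ i → i + 1 ≤ n → v i < v (i + 1))
    (huv : ∀ i, 1 ≤ i → i ≤ n → u i < v i)
    (r : ℕ) (hr : 2 ≤ r) :
    IsPure ↥(PLr n u v (r : ℤ)) ↔
      ∀ p q, IsBlock n u v p q →
        ((∀ i k, p ≤ i → i ≤ k → k ≤ q → epsGt1 u n i → epsGt1 u n k →
            u k - u i = 2 * ((k : ℤ) - (i : ℤ))) ∧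
         (∀ i k, p ≤ i → i ≤ k → k ≤ q → thetaGt1 v i → thetaGt1 v k →
            v k - v i = 2 * ((k : ℤ) - (i : ℤ))) ∧
         (∀ i0, IsBlockMin n u p q i0 →
            (r : ℤ) = (v p - u p) + (i0 : ℤ) - (p : ℤ) + 1)) := by
  rw [isPure_iff_rankGapEq humono hvmono huv (by exact_mod_cast hr)]
  exact ⟨fun hgap p q hb => hgap.blockConditions humono hvmono huv hb,
    rankGapEq_of_blockConditions humono hvmono huv⟩

theorem stmt16
    (n m : ℕ) (u v : ℕ → ℤ)
    (hn : 1 ≤ n) (hnm : n < m)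
    (hu1 : u 1 = 1)
    (humono : ∀ i, 1 ≤ i → i + 1 ≤ n → u i < u (i + 1))
    (hum : u n < (m : ℤ))
    (hv1 : 1 < v 1)
    (hvmono : ∀ i, 1 ≤ i → i + 1 ≤ n → v i < v (i + 1))
    (hvn : v n = (m : ℤ))
    (huv : ∀ i, 1 ≤ i → i ≤ n → u i < v i)
    (hstep : ∀ i, 1 ≤ i → i + 1 ≤ n → u (i + 1) ≤ v i + 1)
    (r : ℕ) (hr : 2 ≤ r) :
    IsPure ↥(PLr n u v (r : ℤ)) ↔
      ∀ p q, IsBlock n u v p q →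
        ((∀ i k, p ≤ i → i ≤ k → k ≤ q → epsGt1 u n i → epsGt1 u n k →
            u k - u i = 2 * ((k : ℤ) - (i : ℤ))) ∧
         (∀ i k, p ≤ i → i ≤ k → k ≤ q → thetaGt1 v i → thetaGt1 v k →
            v k - v i = 2 * ((k : ℤ) - (i : ℤ))) ∧
         (∀ i0, IsBlockMin n u p q i0 →
            (r : ℤ) = (v p - u p) + (i0 : ℤ) - (p : ℤ) + 1)) :=
  stmt16_general n u v humono hvmono huv r hr

end LadderPaper
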